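/- arXiv:2107.09421 — 2 statements merged into one kernel-verified Lean document; each statement's English description precedes it below -/
import Mathlib

section
/- Every square-free word w over the ternary alphabet {0,1,2} of length |w| ≥ 26 satisfies η(w) ≤ |w| − 5, where η(w) is the number of critical points of w. -/
namespace CritFact

/-- A word is square-free if it contains no factor `v ++ v` with `v` nonempty. -/
def SqFree {α : Type*} (w : List α) : Prop :=
  ∀ v : List α, v ≠ [] → ¬ (v ++ v) <:+: w

/-- A position in `w` is an integer `p` with `1 ≤ p < |w|`. -/
def IsPos {α : Type*} (w : List α) (p : ℕ) : Prop :=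
  1 ≤ p ∧ p < w.length

/-- `u` is a repetition word of `w` at position `p` (with `w = x ++ y`, `|x| = p`):
`u` is nonempty, one of `u`, `x` is a suffix of the other, and one of `u`, `y` is a
prefix of the other. -/
def IsRepWord {α : Type*} (w : List α) (p : ℕ) (u : List α) : Prop :=
  u ≠ [] ∧ (u <:+ w.take p ∨ w.take p <:+ u) ∧ (u <+: w.drop p ∨ w.drop p <+: u)

/-- The minimal local period of `w` at position `p`. -/
noncomputable def locPer {α : Type*} (w : List α) (p : ℕ) : ℕ :=
  sInf {n | ∃ u : List α, IsRepWord w p u ∧ u.length = n}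

/-- `q` is a period of `w` if `q > 0` and `w[i] = w[i+q]` whenever both are defined. -/
def HasPeriod {α : Type*} (w : List α) (q : ℕ) : Prop :=
  0 < q ∧ ∀ i : ℕ, i + q < w.length → w[i]? = w[i + q]?

/-- The minimal period of `w`. -/
noncomputable def per {α : Type*} (w : List α) : ℕ :=
  sInf {q | HasPeriod w q}

/-- A position `p` of `w` is critical if the minimal local period at `p` equals
the global period of `w`. -/
def IsCritical {α : Type*} (w : List α) (p : ℕ) : Prop :=
  IsPos w p ∧ locPer w p = per w

open Classical in
/-- `eta w` is the number of critical positions of `w`. -/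
noncomputable def eta {α : Type*} (w : List α) : ℕ :=
  ((Finset.Ico 1 w.length).filter (fun p => IsCritical w p)).card

/-- A word is unbordered if no nonempty proper prefix is also a suffix. -/
def Unbordered {α : Type*} (w : List α) : Prop :=
  ∀ v : List α, v ≠ [] → v ≠ w → ¬ (v <+: w ∧ v <:+ w)

/-- Ternary words. -/
abbrev Word := List (Fin 3)

/-- Thue's morphism `τ(0) = 012`, `τ(1) = 02`, `τ(2) = 1`. -/
def tau (a : Fin 3) : Word :=
  if a = 0 then [0, 1, 2] else if a = 1 then [0, 2] else [1]

/-- The morphism `τ` applied to a word. -/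
def tauW (w : Word) : Word := (w.map tau).flatten

/-- The infinite fixed point `m = 012021012102012⋯` of `τ` starting with `0`. -/
def mInf (n : ℕ) : Fin 3 := (tauW^[n + 1] [0]).getD n 0

/-- `u` is a (finite) factor of the infinite word `m`. -/
def FactorOfM (u : Word) : Prop :=
  ∃ i : ℕ, u = (List.range u.length).map (fun j => mInf (i + j))

/-- `u` is a factor of `m` occurring (starting) after position `i₀`. -/
def FactorOfMAfter (u : Word) (i₀ : ℕ) : Prop :=
  ∃ i : ℕ, i₀ ≤ i ∧ u = (List.range u.length).map (fun j => mInf (i + j))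

/-- `mWord n = τ^{2n-1}(0) · τ^{2n-3}(0) ⋯ τ³(0) · τ(0)`. -/
def mWord : ℕ → Word
  | 0 => []
  | n + 1 => tauW^[2 * n + 1] [0] ++ mWord n

/-- The word `w_x = 0x02x10x02x0`. -/
def wx (x : Word) : Word :=
  [0] ++ x ++ [0, 2] ++ x ++ [1, 0] ++ x ++ [0, 2] ++ x ++ [0]

end CritFact

/-!
A period `q` of a square-free word `w` satisfies `2q > |w|`, since otherwise `w.take (2q)` would
be a square; so `per w ≥ 14` once `|w| ≥ 26`. On the other hand, an exhaustive search over the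
square-free ternary words of length 15 shows that their prefixes of length 1 and 2 recur at some
position `k ≤ 13`, which yields a repetition word of length `≤ 13` at positions 1 and 2. By
reversal the same holds at positions `|w| - 1` and `|w| - 2`, so these four positions are not
critical.
-/

namespace CritFact

open List

section Words

variable {α : Type*}

theorem SqFree.of_infix {v w : List α} (hw : SqFree w) (hvw : v <:+: w) : SqFree v :=
  fun u hu huu => hw u hu (huu.trans hvw)

theorem SqFree.reverse {w : List α} (hw : SqFree w) : SqFree w.reverse := by
  intro u hu huu
  refine hw u.reverse (by simpa using hu) ?_
  rw [← reverse_append, ← reverse_reverse w, reverse_infix]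
  exact huu

theorem take_append_take_eq_take_two_mul {w : List α} {q : ℕ} (hq : HasPeriod w q)
    (hqw : 2 * q ≤ w.length) : w.take q ++ w.take q = w.take (2 * q) := by
  apply ext_getElem?
  intro i
  have hlen : (w.take q).length = q := by simp; omega
  rcases Nat.lt_or_ge i q with hi | hi
  · rw [getElem?_append_left (by omega), getElem?_take_of_lt hi, getElem?_take_of_lt (by omega)]
  rcases Nat.lt_or_ge i (2 * q) with hi2 | hi2
  · rw [getElem?_append_right (by omega), hlen, getElem?_take_of_lt (by omega),
      getElem?_take_of_lt hi2, hq.2 (i - q) (by omega), Nat.sub_add_cancel hi]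
  · rw [getElem?_eq_none (by simp; omega), getElem?_eq_none (by simp; omega)]

theorem SqFree.length_lt_two_mul_per {w : List α} (hw : SqFree w) (hne : w ≠ []) :
    w.length < 2 * per w := by
  have hper : HasPeriod w (per w) :=
    Nat.sInf_mem (s := {q | HasPeriod w q})
      ⟨w.length, length_pos_iff.mpr hne, fun i hi => by omega⟩
  by_contra! hle
  refine hw (w.take (per w)) (by simp [hper.1.ne', hne]) ?_
  rw [take_append_take_eq_take_two_mul hper hle]
  exact (take_prefix _ _).isInfix

theorem locPer_le {w : List α} {p : ℕ} {u : List α} (h : IsRepWord w p u) :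
    locPer w p ≤ u.length :=
  Nat.sInf_le ⟨u, h, rfl⟩

theorem IsRepWord.reverse {w u : List α} {p : ℕ} (h : IsRepWord w p u) :
    IsRepWord w.reverse (w.length - p) u.reverse := by
  obtain ⟨hne, hsuf, hpre⟩ := h
  refine ⟨by simpa using hne, ?_, ?_⟩
  · rw [← reverse_drop]
    simpa only [reverse_suffix] using hpre
  · rw [← reverse_take]
    simpa only [reverse_prefix] using hsuf

theorem isRepWord_of_take_drop_eq {w : List α} {p k : ℕ} (hp : 0 < p) (hpk : p ≤ k)
    (hkw : k + p ≤ w.length) (hk : (w.drop k).take p = w.take p) :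
    IsRepWord w p ((w.drop p).take k) := by
  have hdrop : ((w.drop p).take k).drop (k - p) = w.take p := by
    rw [drop_take, drop_drop, Nat.add_sub_cancel' hpk, Nat.sub_sub_self hpk, hk]
  refine ⟨?_, Or.inr (hdrop ▸ drop_suffix _ _), Or.inl (take_prefix _ _)⟩
  rw [← length_pos_iff]
  simp; omega

theorem eta_le_of_not_isCritical {w : List α} (S : Finset ℕ) (hS : S ⊆ Finset.Ico 1 w.length)
    (hcrit : ∀ p ∈ S, ¬ IsCritical w p) : eta w ≤ w.length - 1 - S.card := by
  classical
  have hsub : (Finset.Ico 1 w.length).filter (IsCritical w) ⊆ Finset.Ico 1 w.length \ S :=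
    fun p hp => Finset.mem_sdiff.mpr
      ⟨(Finset.mem_filter.mp hp).1, fun hpS => hcrit p hpS (Finset.mem_filter.mp hp).2⟩
  calc eta w ≤ (Finset.Ico 1 w.length \ S).card := by
        rw [eta, Finset.filter_congr_decidable]; exact Finset.card_le_card hsub
    _ = w.length - 1 - S.card := by rw [Finset.card_sdiff_of_subset hS, Nat.card_Ico]

end Words

section Search

variable {α : Type*} [DecidableEq α]

def hasSquareSuffix (v : List α) : Bool :=
  (range (v.length / 2 + 1)).any fun l =>
    0 < l && (v.drop (v.length - 2 * l)).take l == v.drop (v.length - l)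

theorem not_sqFree_of_hasSquareSuffix {v : List α} (h : hasSquareSuffix v = true) :
    ¬ SqFree v := by
  simp only [hasSquareSuffix, any_eq_true, mem_range, Bool.and_eq_true, decide_eq_true_eq,
    beq_iff_eq] at h
  obtain ⟨l, hl2, hl, hsq⟩ := h
  intro hv
  refine hv (v.drop (v.length - l)) (by simp; omega) ?_
  have hsplit : v.drop (v.length - l) ++ v.drop (v.length - l) = v.drop (v.length - 2 * l) := by
    conv_rhs => rw [← take_append_drop l (v.drop (v.length - 2 * l)), hsq, drop_drop]
    congr 2
    omega
  rw [hsplit]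
  exact (drop_suffix _ _).isInfix

def prefixRecurs (p B : ℕ) (v : List α) : Bool :=
  (range (B + 1)).any fun k =>
    decide (p ≤ k ∧ k + p ≤ v.length) && (v.drop k).take p == v.take p

theorem prefixRecurs_append {p B : ℕ} {v : List α} (h : prefixRecurs p B v = true)
    (t : List α) : prefixRecurs p B (v ++ t) = true := by
  simp only [prefixRecurs, any_eq_true, mem_range, Bool.and_eq_true, decide_eq_true_eq,
    beq_iff_eq] at h ⊢
  obtain ⟨k, hkB, ⟨hpk, hkv⟩, hk⟩ := h
  refine ⟨k, hkB, ⟨hpk, by simp; omega⟩, ?_⟩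
  rw [drop_append_of_le_length (by omega), take_append_of_le_length (by simp; omega),
    take_append_of_le_length (by omega), hk]

/-- Explores the extensions of `v` by `n` letters of `A`, pruning a branch as soon as it ends
in a square or its `p`-prefix recurs. -/
def recurrenceSearch (A : List α) (p B : ℕ) : ℕ → List α → Bool
  | 0, v => hasSquareSuffix v || prefixRecurs p B v
  | n + 1, v => hasSquareSuffix v || prefixRecurs p B v ||
      A.all fun a => recurrenceSearch A p B n (v ++ [a])

theorem prefixRecurs_of_recurrenceSearch {A : List α} (hA : ∀ a, a ∈ A) {p B : ℕ} :
    ∀ {n : ℕ} {v : List α}, recurrenceSearch A p B n v = true →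
      ∀ e : List α, e.length = n → SqFree (v ++ e) → prefixRecurs p B (v ++ e) = true
  | 0, v, hsearch, e, he, hsf => by
    rw [length_eq_zero_iff.mp he, append_nil] at hsf ⊢
    simp only [recurrenceSearch, Bool.or_eq_true] at hsearch
    exact hsearch.resolve_left fun hsq => not_sqFree_of_hasSquareSuffix hsq hsf
  | n + 1, v, hsearch, e, he, hsf => by
    simp only [recurrenceSearch, Bool.or_eq_true, all_eq_true] at hsearch
    rcases hsearch with (hsq | hrec) | hext
    · exact absurd (hsf.of_infix (prefix_append v e).isInfix) (not_sqFree_of_hasSquareSuffix hsq)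
    · exact prefixRecurs_append hrec e
    · obtain ⟨a, e, rfl⟩ := exists_cons_of_length_eq_add_one he
      rw [← singleton_append, ← append_assoc] at hsf ⊢
      exact prefixRecurs_of_recurrenceSearch hA (hext a (hA a)) e (by simpa using he) hsf

theorem exists_isRepWord_of_recurrenceSearch {A : List α} (hA : ∀ a, a ∈ A) {p B L : ℕ}
    (hp : 0 < p) (hsearch : recurrenceSearch A p B L [] = true) {w : List α} (hw : SqFree w)
    (hL : L ≤ w.length) : ∃ u, IsRepWord w p u ∧ u.length ≤ B := by
  have hrec := prefixRecurs_of_recurrenceSearch hA hsearch (w.take L) (by simp; omega)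
    (hw.of_infix (take_prefix L w).isInfix)
  simp only [nil_append, prefixRecurs, any_eq_true, mem_range, Bool.and_eq_true,
    decide_eq_true_eq, beq_iff_eq, length_take, take_take, drop_take] at hrec
  obtain ⟨k, hkB, ⟨hpk, hkL⟩, hk⟩ := hrec
  rw [Nat.min_eq_left (by omega), Nat.min_eq_left (by omega)] at hk
  exact ⟨_, isRepWord_of_take_drop_eq hp hpk (by omega) hk, by simp; omega⟩

theorem locPer_le_of_recurrenceSearch {A : List α} (hA : ∀ a, a ∈ A) {p B L : ℕ}
    (hp : 0 < p) (hsearch : recurrenceSearch A p B L [] = true) {w : List α} (hw : SqFree w)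
    (hL : L ≤ w.length) : locPer w p ≤ B ∧ locPer w (w.length - p) ≤ B := by
  obtain ⟨u, hu, huB⟩ := exists_isRepWord_of_recurrenceSearch hA hp hsearch hw hL
  obtain ⟨v, hv, hvB⟩ :=
    exists_isRepWord_of_recurrenceSearch hA hp hsearch hw.reverse (by simpa using hL)
  have hv' := hv.reverse
  rw [reverse_reverse, length_reverse] at hv'
  exact ⟨(locPer_le hu).trans huB, (locPer_le hv').trans (by simpa using hvB)⟩

end Search

theorem locPer_le_thirteen {w : Word} (hw : SqFree w) (hL : 15 ≤ w.length) {p : ℕ}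
    (hp : p = 1 ∨ p = 2) : locPer w p ≤ 13 ∧ locPer w (w.length - p) ≤ 13 := by
  have hA : ∀ a : Fin 3, a ∈ [0, 1, 2] := by decide
  rcases hp with rfl | rfl
  · exact locPer_le_of_recurrenceSearch hA one_pos (by decide) hw hL
  · exact locPer_le_of_recurrenceSearch hA two_pos (by decide) hw hL

end CritFact

/-- every square-free ternary word of length at least 26 satisfies
`η(w) ≤ |w| - 5`. -/
theorem eta_upper_bound (w : CritFact.Word)
    (hsf : CritFact.SqFree w) (h : 26 ≤ w.length) :
    CritFact.eta w ≤ w.length - 5 := by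
  open CritFact in
  have hper : 13 < per w := by
    have := hsf.length_lt_two_mul_per (List.ne_nil_of_length_pos (by omega)); omega
  obtain ⟨h1, h1'⟩ := locPer_le_thirteen hsf (by omega) (Or.inl rfl)
  obtain ⟨h2, h2'⟩ := locPer_le_thirteen hsf (by omega) (Or.inr rfl)
  refine (eta_le_of_not_isCritical {1, 2, w.length - 2, w.length - 1} ?_ ?_).trans_eq ?_
  · intro p hp
    simp only [Finset.mem_insert, Finset.mem_singleton, Finset.mem_Ico] at hp ⊢
    omega
  · intro p hp hcrit
    have := hcrit.2
    simp only [Finset.mem_insert, Finset.mem_singleton] at hp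
    rcases hp with rfl | rfl | rfl | rfl <;> omega
  · rw [Finset.card_insert_of_notMem (by simp; omega),
      Finset.card_insert_of_notMem (by simp; omega), Finset.card_pair (by omega)]
    omega
end

section
/- Every square-free word w over the ternary alphabet {0,1,2} with |w| ≥ 2 satisfies η(w) ≥ |w|/4, where η(w) is the number of critical points of w. -/
namespace CritFact

variable {α : Type*}

theorem prefix_or_prefix_iff {u v : List α} :
    u <+: v ∨ v <+: u ↔ ∀ k, k < u.length → k < v.length → u[k]? = v[k]? := by
  constructor
  · rintro (h | h) k hu hv
    · rw [List.prefix_iff_eq_take.1 h, List.getElem?_take_of_lt hu]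
    · rw [List.prefix_iff_eq_take.1 h, List.getElem?_take_of_lt hv]
  · intro h
    rcases le_total u.length v.length with huv | hvu
    · refine .inl (List.prefix_iff_getElem?.2 fun k hk => ?_)
      rw [← h k hk (by omega), List.getElem?_eq_getElem]
    · refine .inr (List.prefix_iff_getElem?.2 fun k hk => ?_)
      rw [h k (by omega) hk, List.getElem?_eq_getElem]

theorem suffix_or_suffix_iff {u v : List α} :
    u <:+ v ∨ v <:+ u ↔ ∀ i j, i < u.length → j < v.length →
      i + v.length = j + u.length → u[i]? = v[j]? := by
  rw [← List.reverse_prefix, ← List.reverse_prefix, prefix_or_prefix_iff]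
  simp only [List.length_reverse]
  constructor
  · intro h i j hi hj hij
    have := h (u.length - 1 - i) (by omega) (by omega)
    rwa [List.getElem?_reverse (by omega), List.getElem?_reverse (by omega),
      show u.length - 1 - (u.length - 1 - i) = i by omega,
      show v.length - 1 - (u.length - 1 - i) = j by omega] at this
  · intro h k hu hv
    rw [List.getElem?_reverse hu, List.getElem?_reverse hv]
    exact h _ _ (by omega) (by omega) (by omega)

def PeriodicOn (w : List α) (ℓ s t : ℕ) : Prop :=
  ∀ i, s ≤ i → i < t → i + ℓ < w.length → w[i]? = w[i + ℓ]?

namespace PeriodicOn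

variable {w : List α} {ℓ d s t : ℕ}

theorem mono (h : PeriodicOn w ℓ s t) {s' t' : ℕ} (hs : s ≤ s') (ht : t' ≤ t) :
    PeriodicOn w ℓ s' t' :=
  fun i hs' ht' hn => h i (hs.trans hs') (ht'.trans_le ht) hn

theorem union {u : ℕ} (h₁ : PeriodicOn w ℓ s t) (h₂ : PeriodicOn w ℓ t u) :
    PeriodicOn w ℓ s u :=
  fun i hs hu hn => (lt_or_ge i t).elim (fun ht => h₁ i hs ht hn) (fun ht => h₂ i ht hu hn)

theorem extend_right (h : PeriodicOn w ℓ s t) (ht : w.length ≤ t + ℓ) (u : ℕ) :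
    PeriodicOn w ℓ s u :=
  fun i hs _ hn => h i hs (by omega) hn

theorem diff_shift (h₁ : PeriodicOn w ℓ s t) (h₂ : PeriodicOn w (ℓ + d) s t) :
    PeriodicOn w d (s + ℓ) (t + ℓ) := by
  intro i hs ht hn
  obtain ⟨j, rfl⟩ : ∃ j, i = j + ℓ := ⟨i - ℓ, by omega⟩
  rw [← h₁ j (by omega) (by omega) (by omega), h₂ j (by omega) (by omega) (by omega), add_assoc]

theorem diff_of_shift (h₁ : PeriodicOn w (ℓ + d) s t) (h₂ : PeriodicOn w ℓ (s + d) (t + d))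
    (hn : t + ℓ + d ≤ w.length) : PeriodicOn w d s t := by
  intro i hs ht _
  rw [h₁ i hs ht (by omega), h₂ (i + d) (by omega) (by omega) (by omega),
    show i + d + ℓ = i + (ℓ + d) by omega]

end PeriodicOn

section Period

variable {w : List α} {q : ℕ}

theorem hasPeriod_of_periodicOn {t : ℕ} (hq : 0 < q) (h : PeriodicOn w q 0 t)
    (ht : w.length ≤ t + q) : HasPeriod w q :=
  ⟨hq, fun i hn => h i i.zero_le (by omega) hn⟩

theorem HasPeriod.getElem?_mod (h : HasPeriod w q) {i : ℕ} (hi : i < w.length) :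
    w[i]? = w[i % q]? := by
  have hq := h.1
  induction i using Nat.strong_induction_on with
  | _ i ih =>
    rcases lt_or_ge i q with hiq | hiq
    · rw [Nat.mod_eq_of_lt hiq]
    · rw [Nat.mod_eq_sub_mod hiq, ← ih (i - q) (by omega) (by omega),
        h.2 (i - q) (by omega), Nat.sub_add_cancel hiq]

theorem hasPeriod_length (hw : w ≠ []) : HasPeriod w w.length :=
  ⟨List.length_pos_iff.2 hw, fun _ hi => absurd hi (by omega)⟩

theorem hasPeriod_per (hw : w ≠ []) : HasPeriod w (per w) :=
  Nat.sInf_mem (s := {q | HasPeriod w q}) ⟨_, hasPeriod_length hw⟩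

theorem per_le (h : HasPeriod w q) : per w ≤ q :=
  Nat.sInf_le h

theorem per_le_length (hw : w ≠ []) : per w ≤ w.length :=
  per_le (hasPeriod_length hw)

end Period

theorem SqFree.not_periodicOn {w : List α} {ℓ s t : ℕ} (hsf : SqFree w) (hℓ : 0 < ℓ)
    (hst : s + ℓ ≤ t) (hn : s + ℓ + ℓ ≤ w.length) : ¬ PeriodicOn w ℓ s t := by
  intro h
  have hv : ((w.drop s).take ℓ).length = ℓ := by simp; omega
  refine hsf ((w.drop s).take ℓ) (List.ne_nil_of_length_pos (by omega)) ?_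
  have hsquare : (w.drop s).take ℓ = ((w.drop s).drop ℓ).take ℓ := by
    refine List.ext_getElem? fun k => ?_
    simp only [List.getElem?_take, List.getElem?_drop]
    split_ifs with hk
    · rw [h (s + k) (by omega) (by omega) (by omega), Nat.add_right_comm, Nat.add_assoc]
    · rfl
  calc (w.drop s).take ℓ ++ (w.drop s).take ℓ = (w.drop s).take (ℓ + ℓ) := by
        nth_rw 2 [hsquare]; exact List.take_add.symm
    _ <:+: w := (List.take_prefix _ _).isInfix.trans (List.drop_suffix s w).isInfix

section RepetitionWord

variable {w u : List α} {p : ℕ}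

/- `p - u.length` truncates to `0` when `u` is longer than the left factor, as intended. -/
theorem IsRepWord.periodicOn (h : IsRepWord w p u) (hp : p ≤ w.length) :
    PeriodicOn w u.length (p - u.length) p := by
  obtain ⟨-, hx, hy⟩ := h
  rw [suffix_or_suffix_iff, List.length_take_of_le hp] at hx
  rw [prefix_or_prefix_iff, List.length_drop] at hy
  intro i hi hip hn
  calc w[i]? = (w.take p)[i]? := (List.getElem?_take_of_lt hip).symm
    _ = u[i + u.length - p]? := (hx _ _ (by omega) (by omega) (by omega)).symm
    _ = (w.drop p)[i + u.length - p]? := hy _ (by omega) (by omega)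
    _ = w[i + u.length]? := by rw [List.getElem?_drop]; congr 1; omega

theorem exists_isRepWord_of_hasPeriod {q : ℕ} (hq : HasPeriod w q) (hqn : q ≤ w.length)
    (hp : p ≤ w.length) : ∃ u, IsRepWord w p u ∧ u.length = q := by
  have hlen : ((w.take q).rotate p).length = q := by simp; omega
  have hget : ∀ k < q, ((w.take q).rotate p)[k]? = w[(k + p) % q]? := fun k hk => by
    rw [List.getElem?_rotate (by rwa [List.length_take_of_le hqn]), List.length_take_of_le hqn,
      List.getElem?_take_of_lt (Nat.mod_lt _ hq.1)]
  refine ⟨(w.take q).rotate p, ⟨List.ne_nil_of_length_pos (by rw [hlen]; exact hq.1), ?_, ?_⟩, hlen⟩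
  · refine suffix_or_suffix_iff.2 fun i j hi hj hij => ?_
    rw [hlen] at hi hij
    rw [List.length_take_of_le hp] at hj hij
    rw [hget i hi, List.getElem?_take_of_lt hj, hq.getElem?_mod (i := j) (by omega),
      show i + p = j + q by omega, Nat.add_mod_right]
  · refine prefix_or_prefix_iff.2 fun k hk hk' => ?_
    rw [hlen] at hk
    rw [List.length_drop] at hk'
    rw [hget k hk, List.getElem?_drop, ← hq.getElem?_mod (by omega), Nat.add_comm]

theorem locPer_le_per (hw : w ≠ []) (hp : p ≤ w.length) : locPer w p ≤ per w := by
  obtain ⟨u, hu, hlen⟩ :=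
    exists_isRepWord_of_hasPeriod (hasPeriod_per hw) (per_le_length hw) hp
  exact Nat.sInf_le ⟨u, hu, hlen⟩

end RepetitionWord

section Overhang

variable {w : List α} {p ℓ : ℕ}

/- A local period `ℓ < per w` at `p` whose repetition word sticks out past the start of `w`
(`IsLeftOverhang`) or past its end (`IsRightOverhang`). -/
def IsLeftOverhang (w : List α) (p ℓ : ℕ) : Prop :=
  p < ℓ ∧ p + ℓ < w.length ∧ ℓ < per w ∧ PeriodicOn w ℓ 0 p

def IsRightOverhang (w : List α) (p ℓ : ℕ) : Prop :=
  ℓ < p ∧ w.length < p + ℓ ∧ ℓ < per w ∧ PeriodicOn w ℓ (p - ℓ) p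

theorem isLeftOverhang_or_isRightOverhang (hsf : SqFree w) (hℓ : 0 < ℓ) (hper : ℓ < per w)
    (h : PeriodicOn w ℓ (p - ℓ) p) : IsLeftOverhang w p ℓ ∨ IsRightOverhang w p ℓ := by
  have hsquare : ¬ (ℓ ≤ p ∧ p + ℓ ≤ w.length) := fun ⟨h₁, h₂⟩ =>
    hsf.not_periodicOn hℓ (by omega) (by omega) h
  have hglobal : ¬ (p ≤ ℓ ∧ w.length ≤ p + ℓ) := fun ⟨h₁, h₂⟩ =>
    hper.not_ge (per_le (hasPeriod_of_periodicOn hℓ (h.mono (by omega) le_rfl) h₂))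
  by_cases hpℓ : p < ℓ
  · exact .inl ⟨hpℓ, by omega, hper, h.mono (by omega) le_rfl⟩
  · exact .inr ⟨by omega, by omega, hper, h⟩

theorem isCritical_of_forall_not_overhang (hsf : SqFree w) (hp : IsPos w p)
    (hl : ∀ ℓ, ¬ IsLeftOverhang w p ℓ) (hr : ∀ ℓ, ¬ IsRightOverhang w p ℓ) :
    IsCritical w p := by
  have hw : w ≠ [] := List.ne_nil_of_length_pos (by have := hp.2; omega)
  refine ⟨hp, (locPer_le_per hw hp.2.le).antisymm ?_⟩
  obtain ⟨u, hu, hlen⟩ :=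
    exists_isRepWord_of_hasPeriod (hasPeriod_per hw) (per_le_length hw) hp.2.le
  refine le_csInf ⟨_, u, hu, hlen⟩ ?_
  rintro _ ⟨v, hv, rfl⟩
  by_contra! hshort
  rcases isLeftOverhang_or_isRightOverhang hsf (List.length_pos_iff.2 hv.1) hshort
    (hv.periodicOn hp.2.le) with h | h
  exacts [hl _ h, hr _ h]

theorem IsLeftOverhang.four_mul_add_le (hsf : SqFree w) {a b ℓ₁ ℓ₂ : ℕ}
    (hA : IsLeftOverhang w a ℓ₁) (hB : IsRightOverhang w b ℓ₂) :
    4 * a + w.length + 4 ≤ 4 * b := by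
  obtain ⟨ha, han, hper, hA⟩ := hA
  obtain ⟨hb, hbn, -, hB⟩ := hB
  by_contra! hgap
  have hℓ : ℓ₂ + a < ℓ₁ + b := by
    by_contra! h
    exact hsf.not_periodicOn (s := b - ℓ₂) (t := a) (by omega) (by omega) (by omega)
      (hA.mono (Nat.zero_le _) le_rfl)
  rcases lt_trichotomy ℓ₁ ℓ₂ with hlt | rfl | hgt
  · obtain ⟨d, rfl⟩ := Nat.exists_eq_add_of_le hlt.le
    have key : a + ℓ₁ < b ∨ w.length < b + d := by
      by_contra! h
      refine hsf.not_periodicOn (ℓ := d) (s := b - (ℓ₁ + d) + ℓ₁) (t := b - ℓ₁ + ℓ₁)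
        (by omega) (by omega) (by omega) (PeriodicOn.diff_shift ?_ ?_)
      exacts [hA.mono (by omega) (by omega), hB.mono le_rfl (by omega)]
    omega
  · exact hper.not_ge (per_le (hasPeriod_of_periodicOn (by omega)
      ((hA.mono le_rfl (show b - ℓ₁ ≤ a by omega)).union hB) hbn.le))
  · obtain ⟨d, rfl⟩ := Nat.exists_eq_add_of_le hgt.le
    have key : a + ℓ₂ < b ∨ w.length < b + d := by
      by_contra! h
      refine hsf.not_periodicOn (ℓ := d) (s := b - (ℓ₂ + d)) (t := b - (ℓ₂ + d) + d)
        (by omega) (by omega) (by omega) (PeriodicOn.diff_of_shift (ℓ := ℓ₂) ?_ ?_ (by omega))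
      exacts [hA.mono (by omega) (by omega), (hB.extend_right hbn.le _).mono (by omega) le_rfl]
    omega

theorem exists_critical_window (hsf : SqFree w) (h2 : 2 ≤ w.length) :
    ∃ a b, 4 * a + w.length + 4 ≤ 4 * b ∧ b ≤ w.length ∧
      ∀ p, a < p → p < b → IsCritical w p := by
  classical
  obtain ⟨a, ha, ha_max⟩ : ∃ a, (a = 0 ∨ ∃ ℓ, IsLeftOverhang w a ℓ) ∧
      ∀ p ≤ w.length, (∃ ℓ, IsLeftOverhang w p ℓ) → p ≤ a :=
    ⟨_, Nat.findGreatest_spec (P := fun a => a = 0 ∨ ∃ ℓ, IsLeftOverhang w a ℓ)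
      (Nat.zero_le _) (Or.inl rfl),
      fun p hp h => Nat.le_findGreatest hp (Or.inr h)⟩
  have hR : ∃ b, b = w.length ∨ ∃ ℓ, IsRightOverhang w b ℓ := ⟨_, Or.inl rfl⟩
  obtain ⟨b, hb, hb_min⟩ : ∃ b, (b = w.length ∨ ∃ ℓ, IsRightOverhang w b ℓ) ∧
      ∀ p, (p = w.length ∨ ∃ ℓ, IsRightOverhang w p ℓ) → b ≤ p :=
    ⟨_, Nat.find_spec hR, fun p h => Nat.find_min' hR h⟩
  have hbn : b ≤ w.length := hb_min _ (Or.inl rfl)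
  refine ⟨a, b, ?_, hbn, fun p hap hpb => ?_⟩
  · rcases ha with ha | ⟨ℓ₁, hA⟩ <;> rcases hb with hb | ⟨ℓ₂, hB⟩
    · omega
    · obtain ⟨_, _, _, _⟩ := hB; omega
    · obtain ⟨_, _, _, _⟩ := hA; omega
    · exact hA.four_mul_add_le hsf hB
  · refine isCritical_of_forall_not_overhang hsf ⟨by omega, by omega⟩
      (fun ℓ h => ?_) (fun ℓ h => ?_)
    · exact hap.not_ge (ha_max p (by omega) ⟨ℓ, h⟩)
    · exact hpb.not_ge (hb_min p (Or.inr ⟨ℓ, h⟩))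

end Overhang

end CritFact

/-- every square-free ternary word `w` with `|w| ≥ 2` satisfies
`η(w) ≥ |w|/4`. -/
theorem eta_lower_bound (w : CritFact.Word)
    (hsf : CritFact.SqFree w) (h2 : 2 ≤ w.length) :
    (w.length : ℝ) / 4 ≤ (CritFact.eta w : ℝ) := by
  classical
  obtain ⟨a, b, hgap, hbn, hcrit⟩ := CritFact.exists_critical_window hsf h2
  have hwindow : Finset.Ioo a b ⊆ (Finset.Ico 1 w.length).filter (CritFact.IsCritical w) :=
    fun p hp => by
      obtain ⟨hap, hpb⟩ := Finset.mem_Ioo.1 hp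
      exact Finset.mem_filter.2 ⟨Finset.mem_Ico.2 ⟨by omega, by omega⟩, hcrit p hap hpb⟩
  have hcard : b - a - 1 ≤ CritFact.eta w := by
    simpa only [Nat.card_Ioo, CritFact.eta] using Finset.card_le_card hwindow
  rw [div_le_iff₀ (by norm_num)]
  exact_mod_cast (show w.length ≤ CritFact.eta w * 4 by omega)
end
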